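/- Let s ∈ ℤ and let u, w be complex numbers with 0 < |u| < 1 and |u|^{−2s} < |w| < |u|^{−2s−2}. For each integer m set R_m = max(m, 2−m). Then Σ_{m∈ℤ} w^{6m−4s−8} ( Σ_{ℓ=0}^∞ ( u^{4(3ℓ+s+1)(3m+3ℓ−s−3)} − u^{4(3ℓ+s+3)(3m+3ℓ−s−1)} ) ) = Σ_{m∈ℤ} w^{6m−4s−8} u^{−(3m−2s−4)²} ( Σ_{j=0}^∞ ( u^{(3(R_m+2j)−2)²} − u^{(3(R_m+2j)+2)²} ) ), where each inner series converges absolutely for 0 < |u| < 1 and both outer series over m converge absolutely in the stated annulus. -/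

import Mathlib

/-!
Writing the exponents of the resolution as `4ab = (a + b)² - (a - b)²`, with `a - b = 2s + 4 - 3m`
and `a + b = 6ℓ + 3m ∓ 2`, the `ℓ`-th term of the `m`-th inner sum is `u^{-(3m-2s-4)²}` times the
singlet term `u^{(3k-2)²} - u^{(3k+2)²}` at `k = m + 2ℓ`. That term is odd in `k`, so when `m ≤ 0`
the terms `k = m, m + 2, …, -m` cancel in pairs and the sum starts at `k = 2 - m = R_m`.

For convergence, the singlet character at `R ≥ 1` is `O(|u|^{(3R-2)²})`. This bounds the `m`-th
outer term by a constant times `(|w| |u|^{2s+2})^{6m}` for `m ≥ 1` and `(|w| |u|^{2s})^{6m}` for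
`m ≤ 0`: two geometric series, convergent exactly on the annulus.
-/

open Finset

section OddFunction

variable {M : Type*} [AddCommGroup M]

theorem sum_range_neg_add_two_mul_eq_zero {f : ℤ → M} (hf : ∀ k, f (-k) = -f k) (hf0 : f 0 = 0)
    (n : ℕ) : ∑ i ∈ range (n + 1), f (-n + 2 * i) = 0 := by
  refine sum_involution (fun i _ => n - i) (fun i hi => ?_) (fun i hi hfi hni => ?_)
    (fun i _ => mem_range.mpr (by omega))
    (fun i hi => Nat.sub_sub_self (Nat.lt_succ_iff.mp (mem_range.mp hi)))
  · have hi : i ≤ n := Nat.lt_succ_iff.mp (mem_range.mp hi)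
    rw [Nat.cast_sub hi, show -(n : ℤ) + 2 * (n - i : ℤ) = -(-n + 2 * i) by ring, hf,
      add_neg_cancel]
  · rw [show -(n : ℤ) + 2 * i = 0 by omega, hf0] at hfi
    exact hfi rfl

variable [TopologicalSpace M] [IsTopologicalAddGroup M] [T2Space M]

theorem tsum_add_two_mul_eq_tsum_max {f : ℤ → M} (hf : ∀ k, f (-k) = -f k) (hf0 : f 0 = 0)
    (m : ℤ) (hs : Summable fun ℓ : ℕ => f (m + 2 * ℓ)) :
    ∑' ℓ : ℕ, f (m + 2 * ℓ) = ∑' j : ℕ, f (max m (2 - m) + 2 * j) := by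
  rcases le_or_gt 1 m with hm | hm
  · rw [max_eq_left (by omega)]
  obtain ⟨n, rfl⟩ : ∃ n : ℕ, m = -n := ⟨(-m).toNat, by omega⟩
  rw [← hs.sum_add_tsum_nat_add (n + 1), sum_range_neg_add_two_mul_eq_zero hf hf0, zero_add,
    max_eq_right (by omega)]
  refine tsum_congr fun j => congrArg f ?_
  push_cast
  ring

end OddFunction

section Singlet

variable {𝕜 : Type*} [NormedField 𝕜]

def singletTerm (u : 𝕜) (k : ℤ) : 𝕜 := u ^ ((3 * k - 2) ^ 2) - u ^ ((3 * k + 2) ^ 2)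

/-- The `η²`-rescaled character of the singlet module `M_{R,2}`. -/
noncomputable def singletChar (u : 𝕜) (R : ℤ) : 𝕜 := ∑' j : ℕ, singletTerm u (R + 2 * j)

theorem singletTerm_neg (u : 𝕜) (k : ℤ) : singletTerm u (-k) = -singletTerm u k := by
  rw [singletTerm, singletTerm, neg_sub, show (3 * -k - 2) ^ 2 = (3 * k + 2) ^ 2 by ring,
    show (3 * -k + 2) ^ 2 = (3 * k - 2) ^ 2 by ring]

theorem singletTerm_zero (u : 𝕜) : singletTerm u 0 = 0 := sub_self _

theorem zpow_sub_zpow_eq_mul_singletTerm {u : 𝕜} (hu : u ≠ 0) (s m ℓ : ℤ) :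
    u ^ (4 * (3 * ℓ + s + 1) * (3 * m + 3 * ℓ - s - 3))
        - u ^ (4 * (3 * ℓ + s + 3) * (3 * m + 3 * ℓ - s - 1))
      = u ^ (-(3 * m - 2 * s - 4) ^ 2) * singletTerm u (m + 2 * ℓ) := by
  rw [singletTerm, mul_sub (u ^ _), ← zpow_add₀ hu, ← zpow_add₀ hu]
  congr 2 <;> ring

theorem norm_zpow_le_mul_pow {u : 𝕜} (hu0 : 0 < ‖u‖) (hu1 : ‖u‖ < 1) {E e : ℤ} {n : ℕ}
    (h : E + n ≤ e) : ‖u ^ e‖ ≤ ‖u‖ ^ E * ‖u‖ ^ n := by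
  rw [norm_zpow, ← zpow_natCast, ← zpow_add₀ hu0.ne']
  exact zpow_le_zpow_right_of_le_one₀ hu0 hu1.le h

theorem norm_singletTerm_le {u : 𝕜} (hu0 : 0 < ‖u‖) (hu1 : ‖u‖ < 1) {R : ℤ} (hR : 1 ≤ R)
    (j : ℕ) : ‖singletTerm u (R + 2 * j)‖ ≤ 2 * ‖u‖ ^ ((3 * R - 2) ^ 2) * ‖u‖ ^ j := by
  have hj : (0 : ℤ) ≤ j := j.cast_nonneg
  have h₁ : (3 * R - 2) ^ 2 + j ≤ (3 * (R + 2 * j) - 2) ^ 2 := by nlinarith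
  have h₂ : (3 * R - 2) ^ 2 + j ≤ (3 * (R + 2 * j) + 2) ^ 2 := by nlinarith
  calc ‖singletTerm u (R + 2 * j)‖
      ≤ ‖u ^ ((3 * (R + 2 * j) - 2) ^ 2)‖ + ‖u ^ ((3 * (R + 2 * j) + 2) ^ 2)‖ :=
        norm_sub_le _ _
    _ ≤ ‖u‖ ^ ((3 * R - 2) ^ 2) * ‖u‖ ^ j + ‖u‖ ^ ((3 * R - 2) ^ 2) * ‖u‖ ^ j :=
        add_le_add (norm_zpow_le_mul_pow hu0 hu1 h₁) (norm_zpow_le_mul_pow hu0 hu1 h₂)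
    _ = 2 * ‖u‖ ^ ((3 * R - 2) ^ 2) * ‖u‖ ^ j := by ring

theorem summable_norm_singletTerm_of_one_le {u : 𝕜} (hu0 : 0 < ‖u‖) (hu1 : ‖u‖ < 1) {R : ℤ}
    (hR : 1 ≤ R) : Summable fun j : ℕ => ‖singletTerm u (R + 2 * j)‖ :=
  .of_nonneg_of_le (fun _ => norm_nonneg _) (norm_singletTerm_le hu0 hu1 hR)
    ((summable_geometric_of_lt_one hu0.le hu1).mul_left _)

theorem summable_norm_singletTerm {u : 𝕜} (hu0 : 0 < ‖u‖) (hu1 : ‖u‖ < 1) (k : ℤ) :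
    Summable fun j : ℕ => ‖singletTerm u (k + 2 * j)‖ := by
  set N := (1 - k).toNat
  refine (summable_nat_add_iff N).mp
    ((summable_norm_singletTerm_of_one_le hu0 hu1 (R := k + 2 * N) (by omega)).congr fun j => ?_)
  rw [Nat.cast_add, mul_add, add_right_comm, add_assoc]

theorem norm_singletChar_le {u : 𝕜} (hu0 : 0 < ‖u‖) (hu1 : ‖u‖ < 1) {R : ℤ} (hR : 1 ≤ R) :
    ‖singletChar u R‖ ≤ 2 * (1 - ‖u‖)⁻¹ * ‖u‖ ^ ((3 * R - 2) ^ 2) := by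
  refine tsum_of_norm_bounded ((hasSum_geometric_of_lt_one hu0.le hu1).mul_left _)
    (norm_singletTerm_le hu0 hu1 hR) |>.trans_eq ?_
  ring

theorem tsum_resolution_eq [CompleteSpace 𝕜] {u : 𝕜} (hu0 : 0 < ‖u‖) (hu1 : ‖u‖ < 1)
    (s m : ℤ) :
    ∑' ℓ : ℕ, (u ^ (4 * (3 * (ℓ : ℤ) + s + 1) * (3 * m + 3 * (ℓ : ℤ) - s - 3))
        - u ^ (4 * (3 * (ℓ : ℤ) + s + 3) * (3 * m + 3 * (ℓ : ℤ) - s - 1)))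
      = u ^ (-(3 * m - 2 * s - 4) ^ 2) * singletChar u (max m (2 - m)) := by
  simp_rw [zpow_sub_zpow_eq_mul_singletTerm (norm_pos_iff.mp hu0)]
  rw [tsum_mul_left, singletChar, tsum_add_two_mul_eq_tsum_max (singletTerm_neg u)
    (singletTerm_zero u) m (summable_norm_singletTerm hu0 hu1 m).of_norm]

end Singlet

section TwoSidedGeometric

theorem summable_of_eq_zpow_of_eq_zpow {f : ℤ → ℝ} {x y C D : ℝ} (hx0 : 0 ≤ x) (hx1 : x < 1)
    (hy1 : 1 < y) (hpos : ∀ m : ℤ, 1 ≤ m → f m = C * x ^ m)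
    (hneg : ∀ m : ℤ, m ≤ 0 → f m = D * y ^ m) : Summable f := by
  refine .of_nat_of_neg ((summable_nat_add_iff 1).mp ?_) ?_
  · refine ((summable_geometric_of_lt_one hx0 hx1).mul_left (C * x)).congr fun n => ?_
    rw [hpos _ (by omega), zpow_natCast, pow_succ']
    ring
  · refine ((summable_geometric_of_lt_one (by positivity) (inv_lt_one_of_one_lt₀ hy1)).mul_left
      D).congr fun n => ?_
    rw [hneg _ (by omega), zpow_neg, zpow_natCast, inv_pow]

variable {G₀ : Type*} [CommGroupWithZero G₀]

theorem zpow_add_mul_zpow_mul {A : G₀} (hA : A ≠ 0) (r : G₀) (k a b : ℤ) :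
    A ^ (k + a) * r ^ (b * k) = A ^ a * (A * r ^ b) ^ k := by
  rw [zpow_add₀ hA, mul_zpow, zpow_mul, mul_comm (A ^ k), mul_assoc]

theorem zpow_mul_add {x : G₀} (hx : x ≠ 0) (n m c : ℤ) : x ^ (n * m + c) = x ^ c * (x ^ n) ^ m := by
  rw [zpow_add₀ hx, zpow_mul, mul_comm]

end TwoSidedGeometric

theorem summable_zpow_mul_zpow_of_annulus {A r : ℝ} (hr : 0 < r) {s : ℤ}
    (h₁ : r ^ (-2 * s) < A) (h₂ : A < r ^ (-2 * s - 2)) :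
    Summable fun m : ℤ =>
      A ^ (6 * m - 4 * s - 8) * r ^ ((3 * max m (2 - m) - 2) ^ 2 - (3 * m - 2 * s - 4) ^ 2) := by
  have hA : 0 < A := (zpow_pos hr _).trans h₁
  have hx : A * r ^ (2 * s + 2) < 1 :=
    calc A * r ^ (2 * s + 2) < r ^ (-2 * s - 2) * r ^ (2 * s + 2) := by gcongr
      _ = 1 := by rw [← zpow_add₀ hr.ne', show -2 * s - 2 + (2 * s + 2) = 0 by ring, zpow_zero]
  have hy : 1 < A * r ^ (2 * s) :=
    calc 1 = r ^ (-2 * s) * r ^ (2 * s) := by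
          rw [← zpow_add₀ hr.ne', show -2 * s + 2 * s = 0 by ring, zpow_zero]
      _ < A * r ^ (2 * s) := by gcongr
  refine summable_of_eq_zpow_of_eq_zpow (x := (A * r ^ (2 * s + 2)) ^ (6 : ℤ))
    (y := (A * r ^ (2 * s)) ^ (6 : ℤ)) (by positivity)
    (by rw [zpow_ofNat]; exact pow_lt_one₀ (by positivity) hx (by norm_num))
    (by rw [zpow_ofNat]; exact one_lt_pow₀ hy (by norm_num))
    (C := A ^ (-2 * s - 2) * (A * r ^ (2 * s + 2)) ^ (-2 * s - 6))
    (D := A ^ (-2 * s) * (A * r ^ (2 * s)) ^ (-2 * s - 8)) (fun m hm => ?_) (fun m hm => ?_)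
  · rw [max_eq_left (by omega),
      show 6 * m - 4 * s - 8 = (6 * m - 2 * s - 6) + (-2 * s - 2) by ring,
      show (3 * m - 2) ^ 2 - (3 * m - 2 * s - 4) ^ 2 = (2 * s + 2) * (6 * m - 2 * s - 6) by ring,
      zpow_add_mul_zpow_mul hA.ne', show 6 * m - 2 * s - 6 = 6 * m + (-2 * s - 6) by ring,
      zpow_mul_add (by positivity)]
    ring
  · rw [max_eq_right (by omega),
      show 6 * m - 4 * s - 8 = (6 * m - 2 * s - 8) + (-2 * s) by ring,
      show (3 * (2 - m) - 2) ^ 2 - (3 * m - 2 * s - 4) ^ 2 = (2 * s) * (6 * m - 2 * s - 8) by ring,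
      zpow_add_mul_zpow_mul hA.ne', show 6 * m - 2 * s - 8 = 6 * m + (-2 * s - 8) by ring,
      zpow_mul_add (by positivity)]
    ring

theorem summable_norm_zpow_mul_zpow_mul_singletChar {𝕜 : Type*} [NormedField 𝕜] {u w : 𝕜}
    (hu0 : 0 < ‖u‖) (hu1 : ‖u‖ < 1) {s : ℤ} (hw1 : ‖u‖ ^ (-2 * s) < ‖w‖)
    (hw2 : ‖w‖ < ‖u‖ ^ (-2 * s - 2)) :
    Summable fun m : ℤ => ‖w ^ (6 * m - 4 * s - 8) * u ^ (-(3 * m - 2 * s - 4) ^ 2) *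
      singletChar u (max m (2 - m))‖ := by
  refine .of_nonneg_of_le (fun _ => norm_nonneg _) (fun m => ?_)
    ((summable_zpow_mul_zpow_of_annulus hu0 hw1 hw2).mul_left (2 * (1 - ‖u‖)⁻¹))
  rw [norm_mul, norm_mul, norm_zpow, norm_zpow]
  calc _ ≤ ‖w‖ ^ (6 * m - 4 * s - 8) * ‖u‖ ^ (-(3 * m - 2 * s - 4) ^ 2) *
        (2 * (1 - ‖u‖)⁻¹ * ‖u‖ ^ ((3 * max m (2 - m) - 2) ^ 2)) := by
        gcongr
        exact norm_singletChar_le hu0 hu1 (le_max_iff.mpr (by omega))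
    _ = _ := by
        rw [zpow_sub₀ hu0.ne', zpow_neg]
        ring

/-- Full character decomposition `ch L_{−2/3}^s = Σ_{m∈ℤ} ch F_{2m−8/3−4s/3} · ch M_{m,2}`
for `sl(2)`-hat at level `−4/3`: with `R_m = max(m, 2−m)`,
`Σ_{m∈ℤ} w^{6m−4s−8} (Σ_{ℓ≥0} (u^{4(3ℓ+s+1)(3m+3ℓ−s−3)} − u^{4(3ℓ+s+3)(3m+3ℓ−s−1)}))
 = Σ_{m∈ℤ} w^{6m−4s−8} u^{−(3m−2s−4)²} (Σ_{j≥0} (u^{(3(R_m+2j)−2)²} − u^{(3(R_m+2j)+2)²}))`,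
each inner series converging absolutely for `0 < |u| < 1`, and both outer series over `m`
converging absolutely in the annulus `|u|^{−2s} < |w| < |u|^{−2s−2}`. -/
theorem stmt_11 (s : ℤ) (u w : ℂ)
    (hu0 : 0 < ‖u‖) (hu1 : ‖u‖ < 1)
    (hw1 : ‖u‖ ^ (-2 * s) < ‖w‖) (hw2 : ‖w‖ < ‖u‖ ^ (-2 * s - 2)) :
    (∀ m : ℤ, Summable (fun l : ℕ =>
        ‖u ^ (4 * (3 * (l : ℤ) + s + 1) * (3 * m + 3 * (l : ℤ) - s - 3))
          - u ^ (4 * (3 * (l : ℤ) + s + 3) * (3 * m + 3 * (l : ℤ) - s - 1))‖)) ∧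
    (∀ m : ℤ, Summable (fun j : ℕ =>
        ‖u ^ ((3 * (max m (2 - m) + 2 * (j : ℤ)) - 2) ^ 2)
          - u ^ ((3 * (max m (2 - m) + 2 * (j : ℤ)) + 2) ^ 2)‖)) ∧
    Summable (fun m : ℤ => ‖w ^ (6 * m - 4 * s - 8) *
        ∑' l : ℕ, (u ^ (4 * (3 * (l : ℤ) + s + 1) * (3 * m + 3 * (l : ℤ) - s - 3))
          - u ^ (4 * (3 * (l : ℤ) + s + 3) * (3 * m + 3 * (l : ℤ) - s - 1)))‖) ∧
    Summable (fun m : ℤ => ‖w ^ (6 * m - 4 * s - 8) * u ^ (-(3 * m - 2 * s - 4) ^ 2) *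
        ∑' j : ℕ, (u ^ ((3 * (max m (2 - m) + 2 * (j : ℤ)) - 2) ^ 2)
          - u ^ ((3 * (max m (2 - m) + 2 * (j : ℤ)) + 2) ^ 2))‖) ∧
    (∑' m : ℤ, w ^ (6 * m - 4 * s - 8) *
        ∑' l : ℕ, (u ^ (4 * (3 * (l : ℤ) + s + 1) * (3 * m + 3 * (l : ℤ) - s - 3))
          - u ^ (4 * (3 * (l : ℤ) + s + 3) * (3 * m + 3 * (l : ℤ) - s - 1))))
      = ∑' m : ℤ, w ^ (6 * m - 4 * s - 8) * u ^ (-(3 * m - 2 * s - 4) ^ 2) *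
          ∑' j : ℕ, (u ^ ((3 * (max m (2 - m) + 2 * (j : ℤ)) - 2) ^ 2)
            - u ^ ((3 * (max m (2 - m) + 2 * (j : ℤ)) + 2) ^ 2)) := by
  have hu : u ≠ 0 := norm_pos_iff.mp hu0
  have hresolution := tsum_resolution_eq hu0 hu1 s
  refine ⟨fun m => ?_, fun m => summable_norm_singletTerm hu0 hu1 _, ?_,
    summable_norm_zpow_mul_zpow_mul_singletChar hu0 hu1 hw1 hw2, ?_⟩
  · exact ((summable_norm_singletTerm hu0 hu1 m).mul_left ‖u ^ (-(3 * m - 2 * s - 4) ^ 2)‖).congr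
      fun ℓ => by rw [zpow_sub_zpow_eq_mul_singletTerm hu, norm_mul]
  · exact (summable_norm_zpow_mul_zpow_mul_singletChar hu0 hu1 hw1 hw2).congr
      fun m => by rw [hresolution, mul_assoc]
  · exact tsum_congr fun m => by rw [hresolution, mul_assoc]; rfl
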